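/- Let m ≥ 1 and let c₁, c₂ be colors with 0 ≤ c₁ < c₂ ≤ m. Let Q be the simple m-colored quiver on the three vertices v, u₁, u₂ whose only arrows are v →^{(c₁)} u₁, v →^{(c₂)} u₂ and u₁ →^{(c₂−c₁)} u₂ (together with their skew-symmetric reverses). Then applying the colored mutation at v exactly m+1 times returns the original quiver: μ_v^{m+1}(Q) = Q. -/

import Mathlib

open Finset

open scoped Classical

namespace CM

variable {V : Type*}

/-- Raw data of an `m`-colored quiver: `Q i j c` is the number of arrows
from `i` to `j` with color `c`. -/
abbrev CQ (V : Type*) := V → V → ℕ → ℕ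

/-- A colored quiver is simple if there is at most one arrow between distinct vertices. -/
def Simple (m : ℕ) (Q : CQ V) : Prop :=
  ∀ i j : V, i ≠ j → (∑ c ∈ Finset.range (m + 1), Q i j c) ≤ 1

/-- The axioms of an `m`-colored quiver: colors bounded by `m`, no loops,
monochromatic and skew-symmetric. -/
structure IsColoredQuiver (m : ℕ) (Q : CQ V) : Prop where
  colorBound : ∀ i j c, m < c → Q i j c = 0
  noLoops : ∀ i c, Q i i c = 0
  mono : ∀ i j c c', Q i j c ≠ 0 → c ≠ c' → Q i j c' = 0
  skew : ∀ i j c, c ≤ m → Q i j c = Q j i (m - c)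

/-- Colored mutation of `Q` at the vertex `j`. -/
noncomputable def mutate (m : ℕ) (Q : CQ V) (j : V) : CQ V :=
  fun i k c =>
    if m < c then 0
    else if i = k then 0
    else if k = j then Q i k ((c + 1) % (m + 1))
    else if i = j then Q i k ((c + m) % (m + 1))
    else
      (((Q i k c : ℤ) - ∑ t ∈ (Finset.range (m + 1)).erase c, (Q i k t : ℤ))
          + ((Q i j c : ℤ) - (if c = 0 then 0 else (Q i j (c - 1) : ℤ))) * (Q j k 0 : ℤ)
          + (Q i j m : ℤ) * ((Q j k c : ℤ) - (Q j k (c + 1) : ℤ))).toNat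

/-- Mutation equivalence: `Q'` is obtained from `Q` by a finite sequence of
colored mutations. -/
def MutEquiv (m : ℕ) (Q Q' : CQ V) : Prop :=
  ∃ js : List V, Q' = js.foldl (mutate m) Q

/-- Cyclic successor on `Fin l`. -/
def fsucc {l : ℕ} (i : Fin l) : Fin l := ⟨((i : ℕ) + 1) % l, Nat.mod_lt _ i.pos⟩

/-- There is an arrow from `i` to `j` (of some color `≤ m`). -/
def HasArrow (m : ℕ) (Q : CQ V) (i j : V) : Prop := ∃ c, c ≤ m ∧ Q i j c ≠ 0

/-- The underlying graph of a colored quiver. -/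
def underlying (m : ℕ) (Q : CQ V) : SimpleGraph V where
  Adj i j := i ≠ j ∧ (HasArrow m Q i j ∨ HasArrow m Q j i)
  symm := ⟨fun i j hh => ⟨Ne.symm hh.1, hh.2.symm⟩⟩
  loopless := ⟨fun i hh => hh.1 rfl⟩

/-- Number of neighbors of `v`. -/
noncomputable def deg (m : ℕ) (Q : CQ V) (v : V) : ℕ :=
  {u | (underlying m Q).Adj v u}.ncard

/-- A clique: any two distinct members are joined by arrows. -/
def IsClique (m : ℕ) (Q : CQ V) (s : Finset V) : Prop :=
  ∀ i ∈ s, ∀ j ∈ s, i ≠ j → HasArrow m Q i j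

/-- An `m`-admissible triangle. -/
def MAdmissible (m : ℕ) (Q : CQ V) (x y z : V) : Prop :=
  ∃ a b c, a ≤ m ∧ b ≤ m ∧ c ≤ m ∧ Q x y a ≠ 0 ∧ Q y z b ≠ 0 ∧ Q z x c ≠ 0 ∧
    (a + b + c = m - 1 ∨ a + b + c = 2 * m + 1)

/-- A hole: an induced cycle of length at least four in a graph. -/
def IsHole (G : SimpleGraph V) (n : ℕ) (v : Fin n → V) : Prop :=
  4 ≤ n ∧ Function.Injective v ∧
    ∀ i j : Fin n, G.Adj (v i) (v j) ↔ (j = fsucc i ∨ i = fsucc j)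

def HoleFree (G : SimpleGraph V) : Prop := ∀ (n : ℕ) (v : Fin n → V), ¬ IsHole G n v

/-- A quiver of type `A n`: the underlying graph is a path on `n` vertices. -/
def IsTypeA (m n : ℕ) (Q : CQ V) : Prop :=
  ∃ e : Fin n ≃ V, ∀ i j : Fin n,
    (underlying m Q).Adj (e i) (e j) ↔ ((j : ℕ) = (i : ℕ) + 1 ∨ (i : ℕ) = (j : ℕ) + 1)

/-- The class `𝒬ᵐₙ` of colored quivers of mutation type `A n`. -/
def ClassQA (m n : ℕ) {V : Type*} [Finite V] (Q : CQ V) : Prop :=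
  IsColoredQuiver m Q ∧ Simple m Q ∧ Nat.card V = n ∧ (underlying m Q).Connected ∧
    HoleFree (underlying m Q) ∧
    (∀ v : V, 0 < deg m Q v →
      ∃ C B : Finset V, IsClique m Q C ∧ IsClique m Q B ∧ v ∈ C ∧ v ∈ B ∧
        C.card + B.card = deg m Q v + 2 ∧ C.card ≤ m + 2 ∧ B.card ≤ m + 2 ∧
        ∀ i ∈ C, ∀ j ∈ B, i ≠ v → j ≠ v → ¬ HasArrow m Q i j) ∧
    (∀ x y z : V, x ≠ y → y ≠ z → x ≠ z → IsClique m Q {x, y, z} →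
      MAdmissible m Q x y z)

/-- Restriction of a colored quiver to a set of vertices. -/
def CQ.restrict (Q : CQ V) (S : Set V) : CQ S := fun i j c => Q i j c

/-- The subquiver keeping only the arrows inside `S`. -/
noncomputable def keepArrows (Q : CQ V) (S : Set V) : CQ V :=
  fun i j c => if i ∈ S ∧ j ∈ S then Q i j c else 0

/-- Delete all arrows joining vertices of the clique `C`. -/
noncomputable def delCliqueArrows (Q : CQ V) (C : Finset V) : CQ V :=
  fun i j c => if i ∈ C ∧ j ∈ C then 0 else Q i j c

/-- `C` is an almost extremal clique of `Q`: deleting its arrows leaves a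
connected component of type `A k` for some `k ≥ 1`. -/
def AlmostExtremal (m : ℕ) (Q : CQ V) (C : Finset V) : Prop :=
  IsClique m Q C ∧ 3 ≤ C.card ∧
    ∃ (w : V) (k : ℕ), 1 ≤ k ∧
      IsTypeA m k (CQ.restrict (delCliqueArrows Q C)
        {u | (underlying m (delCliqueArrows Q C)).Reachable w u})

/-- The quiver consisting of a single cycle with colors `c i` on the
arrows `i → i+1` (plus skew-symmetric reverses). -/
def cycleQuiver (m l : ℕ) (c : Fin l → ℕ) : CQ (Fin l) :=
  fun i j t =>
    (if i ≠ j ∧ j = fsucc i ∧ t = c i then 1 else 0) +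
    (if i ≠ j ∧ i = fsucc j ∧ t = m - c j then 1 else 0)

/-- The quiver `Ã_{p,q}`: a cycle with `p` arrows of color `0` followed by
`q` arrows of color `m`. -/
def tildeA (m p q : ℕ) : CQ (Fin (p + q)) :=
  cycleQuiver m (p + q) (fun i => if (i : ℕ) < p then 0 else m)

/-- `Q` is a copy of `Ã_{p,q}` on the vertex set `V`. -/
def IsTildeA (m p q : ℕ) (Q : CQ V) : Prop :=
  ∃ e : Fin (p + q) ≃ V, ∀ i j c, Q (e i) (e j) c = tildeA m p q i j c

/-- The linear quiver on `Fin l`, arrow `i → i+1` colored `c i`. -/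
def pathQuiver (m l : ℕ) (c : ℕ → ℕ) : CQ (Fin l) :=
  fun i j t =>
    if (j : ℕ) = (i : ℕ) + 1 ∧ t = c (i : ℕ) then 1
    else if (i : ℕ) = (j : ℕ) + 1 ∧ t = m - c (j : ℕ) then 1 else 0

/-- `Q` consists of a single `(l,h)`-central cycle. -/
def IsCentralCycleQuiver (m l h : ℕ) (Q : CQ V) : Prop :=
  ∃ (a : Fin l → V) (c : Fin l → ℕ), Function.Bijective a ∧ (∀ i, c i ≤ m) ∧
    (∑ i, c i = h * m) ∧ ∀ i j t, Q (a i) (a j) t = cycleQuiver m l c i j t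

/-- A triangle quiver on `Fin 3` with arrows `0 →^{c1} 1`, `0 →^{c2} 2`,
`1 →^{c3} 2` (plus skew-symmetric reverses). -/
def triQ (m c1 c2 c3 : ℕ) : CQ (Fin 3) := fun i j c =>
  if i = 0 ∧ j = 1 ∧ c = c1 then 1
  else if i = 1 ∧ j = 0 ∧ c = m - c1 then 1
  else if i = 0 ∧ j = 2 ∧ c = c2 then 1
  else if i = 2 ∧ j = 0 ∧ c = m - c2 then 1
  else if i = 1 ∧ j = 2 ∧ c = c3 then 1
  else if i = 2 ∧ j = 1 ∧ c = m - c3 then 1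
  else 0

/-- Data witnessing membership of `Q` in the class `𝒬ᵐ_{p,q}`. -/
structure QpqData (m p q : ℕ) {V : Type*} [Fintype V] (Q : CQ V) where
  colored : IsColoredQuiver m Q
  cardV : Nat.card V = p + q
  conn : (underlying m Q).Connected
  l : ℕ
  h : ℕ
  hl : 2 ≤ l
  hpos : 0 < h
  hlt : h < l
  a : Fin l → V
  col : Fin l → ℕ
  inja : Function.Injective a
  colLe : ∀ i, col i ≤ m
  arrows : ∀ i : Fin l, Q (a i) (a (fsucc i)) (col i) ≠ 0
  csum : ∑ i, col i = h * m
  induced : ∀ i j : Fin l, HasArrow m Q (a i) (a j) → (j = fsucc i ∨ i = fsucc j)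
  central_unique : ∀ (l' h' : ℕ) (a' : Fin l' → V) (col' : Fin l' → ℕ),
      2 ≤ l' → 0 < h' → h' < l' → Function.Injective a' → (∀ i, col' i ≤ m) →
      (∀ i : Fin l', Q (a' i) (a' (fsucc i)) (col' i) ≠ 0) →
      (∑ i, col' i = h' * m) →
      (∀ i j : Fin l', HasArrow m Q (a' i) (a' j) → (j = fsucc i ∨ i = fsucc j)) →
      Set.range a' = Set.range a
  double2 : l = 2 →
      (∀ c, c ≤ m → Q (a ⟨0, by omega⟩) (a ⟨1, by omega⟩) c ≠ 0 →
        Q (a ⟨0, by omega⟩) (a ⟨1, by omega⟩) c = 2) ∧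
      (∀ u v : V, u ≠ v → (u ∉ Set.range a ∨ v ∉ Set.range a) →
        (∑ c ∈ Finset.range (m + 1), Q u v c) ≤ 1)
  simple3 : 3 ≤ l → Simple m Q
  holes3 : l ≤ 3 → HoleFree (underlying m Q)
  holes4 : 4 ≤ l → ∀ (n : ℕ) (v : Fin n → V), IsHole (underlying m Q) n v →
      Set.range v = Set.range a
  vertexCliques : ∀ v : V, 0 < deg m Q v →
      ∃ Cr Bk : Finset V, IsClique m Q Cr ∧ IsClique m Q Bk ∧ v ∈ Cr ∧ v ∈ Bk ∧
        1 ≤ Cr.card ∧ Cr.card ≤ m + 2 ∧ 1 ≤ Bk.card ∧ Bk.card ≤ m + 2 ∧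
        deg m Q v = Cr.card + Bk.card - 2 - (if l = 2 then 1 else 0) ∧
        (∀ u ∈ Cr, ∀ w ∈ Bk, u ≠ v → w ≠ v → u ≠ w → HasArrow m Q u w →
          (l = 3 ∧ ({u, v, w} : Set V) = Set.range a))
  D : Fin l → Finset V
  Dclique : ∀ i, IsClique m Q (D i)
  Dmem : ∀ i : Fin l, a i ∈ D i ∧ a (fsucc i) ∈ D i
  Dcard : ∀ i, (D i).card ≤ m + 2
  Dmax : ∀ (i : Fin l) (D' : Finset V), IsClique m Q D' → a i ∈ D' →
      a (fsucc i) ∈ D' → D' ⊆ D i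
  admissible : ∀ x y z : V, x ≠ y → y ≠ z → x ≠ z → IsClique m Q {x, y, z} →
      ¬ (l = 3 ∧ ({x, y, z} : Set V) = Set.range a) → MAdmissible m Q x y z
  periph_tri : ∀ w : V, w ∉ Set.range a → ∀ i j : Fin l, w ∈ D i → w ∈ D j → i = j
  Del : CQ V
  hDel : Del = fun u v c => if ∃ i, u ∈ D i ∧ v ∈ D i then 0 else Q u v c
  nw : V → ℕ
  hnw : ∀ w : V, nw w = {u | (underlying m Del).Reachable w u}.ncard
  central_isolated : ∀ (i : Fin l) (u : V), ¬ (underlying m Del).Adj (a i) u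
  periph_disj : ∀ w w' : V, w ∉ Set.range a → w' ∉ Set.range a →
      (∃ i, w ∈ D i) → (∃ i, w' ∈ D i) → w ≠ w' →
      ¬ (underlying m Del).Reachable w w'
  periph_cover : ∀ u : V, u ∉ Set.range a →
      ∃ w : V, w ∉ Set.range a ∧ (∃ i, w ∈ D i) ∧ (underlying m Del).Reachable w u
  QwClass : ∀ w : V, w ∉ Set.range a → (∃ i, w ∈ D i) →
      ClassQA m (nw w) (CQ.restrict Del {u | (underlying m Del).Reachable w u})
  Wp : Finset V
  Wq : Finset V
  hWp : ∀ w : V, w ∈ Wp ↔ (w ∉ Set.range a ∧ ∃ (i : Fin l) (c1 c2 : ℕ),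
      w ∈ D i ∧ c1 ≤ m ∧ c2 ≤ m ∧ Q (a (fsucc i)) w c1 ≠ 0 ∧ Q w (a i) c2 ≠ 0 ∧
      col i + c1 + c2 = m - 1)
  hWq : ∀ w : V, w ∈ Wq ↔ (w ∉ Set.range a ∧ ∃ (i : Fin l) (c1 c2 : ℕ),
      w ∈ D i ∧ c1 ≤ m ∧ c2 ≤ m ∧ Q (a (fsucc i)) w c1 ≠ 0 ∧ Q w (a i) c2 ≠ 0 ∧
      col i + c1 + c2 = 2 * m + 1)
  hp : p = l - h + ∑ w ∈ Wp, nw w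
  hq : q = h + ∑ w ∈ Wq, nw w

/-- Membership in the class `𝒬ᵐ_{p,q}`. -/
def ClassQpq (m p q : ℕ) {V : Type*} [Fintype V] (Q : CQ V) : Prop :=
  Nonempty (QpqData m p q Q)

/-- `w` is a peripheral vertex. -/
def QpqData.Peripheral {m p q : ℕ} {V : Type*} [Fintype V] {Q : CQ V}
    (d : QpqData m p q Q) (w : V) : Prop :=
  w ∉ Set.range d.a ∧ ∃ i, w ∈ d.D i

/-- The connected component of `w` in the quiver obtained by deleting the
arrows of the boundary subquivers and of the central cycle. -/
def QpqData.comp {m p q : ℕ} {V : Type*} [Fintype V] {Q : CQ V}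
    (d : QpqData m p q Q) (w : V) : Set V :=
  {u | (underlying m d.Del).Reachable w u}

/-- The graph of color-`0` arrows of a colored quiver. -/
def zeroGraph (Q : CQ V) : SimpleGraph V where
  Adj i j := i ≠ j ∧ (Q i j 0 ≠ 0 ∨ Q j i 0 ≠ 0)
  symm := ⟨fun i j hh => ⟨Ne.symm hh.1, hh.2.symm⟩⟩
  loopless := ⟨fun i hh => hh.1 rfl⟩

/-- Number of color-`0` arrows of `R` inside `S` lying in no oriented
`3`-cycle of color-`0` arrows inside `S`. -/
noncomputable def zeroArrowsNoTri (R : CQ V) (S : Set V) : ℕ :=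
  {uv : V × V | uv.1 ∈ S ∧ uv.2 ∈ S ∧ R uv.1 uv.2 0 ≠ 0 ∧
    ¬ ∃ x ∈ S, R uv.2 x 0 ≠ 0 ∧ R x uv.1 0 ≠ 0}.ncard

/-- Number of oriented `3`-cycles of color-`0` arrows of `R` inside `S`. -/
noncomputable def zeroTriCount (R : CQ V) (S : Set V) : ℕ :=
  {t : Finset V | ∃ u v x : V, u ∈ S ∧ v ∈ S ∧ x ∈ S ∧ u ≠ v ∧ v ≠ x ∧ u ≠ x ∧
    t = {u, v, x} ∧ R u v 0 ≠ 0 ∧ R v x 0 ≠ 0 ∧ R x u 0 ≠ 0}.ncard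

/-- Number of oriented cycles of length `k` of color-`0` arrows of `R`
inside `S` (counted by their vertex sets). -/
noncomputable def orientKCycles (R : CQ V) (S : Set V) (k : ℕ) : ℕ :=
  {t : Finset V | ∃ v : Fin k → V, Function.Injective v ∧ (∀ i, v i ∈ S) ∧
    t = Finset.image v Finset.univ ∧ ∀ i, R (v i) (v (fsucc i)) 0 ≠ 0}.ncard

/-!
Mutating at `0` rotates the colors `a` of `0 → 1` and `b` of `0 → 2` by one step, keeps the color
`d` of the arrows `1 → 2`, and changes their number `p` by `+1` when `a` passes `0` and by `-1`
when `b` passes `0`. As `b ≡ a + d` with `1 ≤ d ≤ m`, this makes `p - [a < b]` invariant, for the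
order `1 < ⋯ < m < 0` of colors. So every quiver along the orbit is determined by `a`, and `a`
returns to its start after `m + 1` steps.
-/

lemma mod_eq_ite_of_lt_two_mul {x n : ℕ} (h : x < 2 * n) :
    x % n = if x < n then x else x - n := by
  split_ifs with hx
  · exact Nat.mod_eq_of_lt hx
  · rw [Nat.mod_eq_sub_mod (by omega), Nat.mod_eq_of_lt (by omega)]

lemma mod_add_one_le (a m : ℕ) : a % (m + 1) ≤ m :=
  Nat.lt_succ_iff.mp (Nat.mod_lt _ m.succ_pos)

section Mutation

variable {m : ℕ} {Q : CQ V} {i j k : V} {c : ℕ}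

lemma mutate_apply_of_lt (hc : m < c) : mutate m Q j i k c = 0 := by
  simp [mutate, hc]

lemma mutate_apply_self : mutate m Q j i i c = 0 := by
  simp [mutate]

lemma mutate_apply_at_target (hc : c ≤ m) (hi : i ≠ j) :
    mutate m Q j i j c = Q i j ((c + 1) % (m + 1)) := by
  simp [mutate, hi, not_lt.mpr hc]

lemma mutate_apply_at_source (hc : c ≤ m) (hk : k ≠ j) :
    mutate m Q j j k c = Q j k ((c + m) % (m + 1)) := by
  simp [mutate, hk, hk.symm, not_lt.mpr hc]

lemma mutate_apply_of_ne (hc : c ≤ m) (hik : i ≠ k) (hi : i ≠ j) (hk : k ≠ j) :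
    mutate m Q j i k c =
      (((Q i k c : ℤ) - ∑ t ∈ (Finset.range (m + 1)).erase c, (Q i k t : ℤ))
          + ((Q i j c : ℤ) - (if c = 0 then 0 else (Q i j (c - 1) : ℤ))) * (Q j k 0 : ℤ)
          + (Q i j m : ℤ) * ((Q j k c : ℤ) - (Q j k (c + 1) : ℤ))).toNat := by
  simp [mutate, hik, hi, hk, not_lt.mpr hc]

end Mutation

lemma sum_erase_range_ite {m c d : ℕ} (p : ℤ) (hd : d ≤ m) :
    ∑ t ∈ (Finset.range (m + 1)).erase c, (if t = d then p else 0) = if c = d then 0 else p := by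
  rw [Finset.sum_ite_eq']
  simp only [Finset.mem_erase, Finset.mem_range]
  split_ifs <;> omega

def triangleQuiver (m a b d p : ℕ) : CQ (Fin 3) := fun i j c =>
  (if i = 0 ∧ j = 1 ∧ c = a then 1 else 0) +
  (if i = 1 ∧ j = 0 ∧ c = m - a then 1 else 0) +
  (if i = 0 ∧ j = 2 ∧ c = b then 1 else 0) +
  (if i = 2 ∧ j = 0 ∧ c = m - b then 1 else 0) +
  (if i = 1 ∧ j = 2 ∧ c = d then p else 0) +
  (if i = 2 ∧ j = 1 ∧ c = m - d then p else 0)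

/-- Indicator of `a < b` in the order on colors in which `0` comes last. -/
def ltZeroLast (a b : ℕ) : ℕ := if b = 0 then 1 else if a = 0 then 0 else if a < b then 1 else 0

section TriangleQuiver

variable {m a b d p c : ℕ}

@[simp] lemma triangleQuiver_self (i : Fin 3) : triangleQuiver m a b d p i i c = 0 := by
  fin_cases i <;> simp [triangleQuiver]

@[simp] lemma triangleQuiver_zero_one :
    triangleQuiver m a b d p 0 1 c = if c = a then 1 else 0 := by
  simp [triangleQuiver]

@[simp] lemma triangleQuiver_one_zero :
    triangleQuiver m a b d p 1 0 c = if c = m - a then 1 else 0 := by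
  simp [triangleQuiver]

@[simp] lemma triangleQuiver_zero_two :
    triangleQuiver m a b d p 0 2 c = if c = b then 1 else 0 := by
  simp [triangleQuiver]

@[simp] lemma triangleQuiver_two_zero :
    triangleQuiver m a b d p 2 0 c = if c = m - b then 1 else 0 := by
  simp [triangleQuiver]

@[simp] lemma triangleQuiver_one_two :
    triangleQuiver m a b d p 1 2 c = if c = d then p else 0 := by
  simp [triangleQuiver]

@[simp] lemma triangleQuiver_two_one :
    triangleQuiver m a b d p 2 1 c = if c = m - d then p else 0 := by
  simp [triangleQuiver]

lemma triangleQuiver_apply_of_lt (ha : a ≤ m) (hb : b ≤ m) (hd : d ≤ m) (hc : m < c)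
    (i j : Fin 3) : triangleQuiver m a b d p i j c = 0 := by
  unfold triangleQuiver
  split_ifs <;> omega

lemma mutate_triangleQuiver_one_two (hd : 1 ≤ d) (hdm : d ≤ m) (ha : a ≤ m)
    (hab : b = a + d ∨ b + (m + 1) = a + d) (hp : b = 0 → 1 ≤ p) (hc : c ≤ m) :
    mutate m (triangleQuiver m a b d p) 0 1 2 c =
      if c = d then p + (if a = 0 then 1 else 0) - (if b = 0 then 1 else 0) else 0 := by
  rw [mutate_apply_of_ne hc (by decide) (by decide) (by decide)]
  simp only [triangleQuiver_one_two, triangleQuiver_one_zero, triangleQuiver_zero_two, Nat.cast_ite,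
    Nat.cast_one, Nat.cast_zero, sum_erase_range_ite _ hdm]
  split_ifs <;> omega

lemma mutate_triangleQuiver_two_one (hd : 1 ≤ d) (hdm : d ≤ m) (hb : b ≤ m)
    (hab : b = a + d ∨ b + (m + 1) = a + d) (hp : b = 0 → 1 ≤ p) (hc : c ≤ m) :
    mutate m (triangleQuiver m a b d p) 0 2 1 c =
      if c = m - d then p + (if a = 0 then 1 else 0) - (if b = 0 then 1 else 0) else 0 := by
  rw [mutate_apply_of_ne hc (by decide) (by decide) (by decide)]
  simp only [triangleQuiver_two_one, triangleQuiver_two_zero, triangleQuiver_zero_one, Nat.cast_ite,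
    Nat.cast_one, Nat.cast_zero, sum_erase_range_ite _ (Nat.sub_le m d)]
  split_ifs <;> omega

lemma mutate_triangleQuiver (hd : 1 ≤ d) (hdm : d ≤ m) (ha : a ≤ m) (hb : b ≤ m)
    (hab : b = a + d ∨ b + (m + 1) = a + d) (hp : b = 0 → 1 ≤ p) :
    mutate m (triangleQuiver m a b d p) 0 =
      triangleQuiver m ((a + 1) % (m + 1)) ((b + 1) % (m + 1)) d
        (p + (if a = 0 then 1 else 0) - (if b = 0 then 1 else 0)) := by
  have hsa := mod_eq_ite_of_lt_two_mul (x := a + 1) (n := m + 1) (by omega)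
  have hsb := mod_eq_ite_of_lt_two_mul (x := b + 1) (n := m + 1) (by omega)
  funext i k c
  rcases lt_or_ge m c with hc | hc
  · rw [mutate_apply_of_lt hc,
      triangleQuiver_apply_of_lt (mod_add_one_le _ _) (mod_add_one_le _ _) hdm hc]
  have hcs := mod_eq_ite_of_lt_two_mul (x := c + 1) (n := m + 1) (by omega)
  have hcp := mod_eq_ite_of_lt_two_mul (x := c + m) (n := m + 1) (by omega)
  match i, k with
  | 0, 0 | 1, 1 | 2, 2 => simp [mutate_apply_self]
  | 0, 1 =>
    rw [mutate_apply_at_source hc (by decide)]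
    simp only [triangleQuiver_zero_one, hcp, hsa]
    split_ifs <;> omega
  | 0, 2 =>
    rw [mutate_apply_at_source hc (by decide)]
    simp only [triangleQuiver_zero_two, hcp, hsb]
    split_ifs <;> omega
  | 1, 0 =>
    rw [mutate_apply_at_target hc (by decide)]
    simp only [triangleQuiver_one_zero, hcs, hsa]
    split_ifs <;> omega
  | 2, 0 =>
    rw [mutate_apply_at_target hc (by decide)]
    simp only [triangleQuiver_two_zero, hcs, hsb]
    split_ifs <;> omega
  | 1, 2 => simpa using mutate_triangleQuiver_one_two hd hdm ha hab hp hc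
  | 2, 1 => simpa using mutate_triangleQuiver_two_one hd hdm hb hab hp hc

lemma ltZeroLast_succ (hd : 1 ≤ d) (hdm : d ≤ m) (ha : a ≤ m) (hb : b ≤ m)
    (hab : b = a + d ∨ b + (m + 1) = a + d) :
    ltZeroLast ((a + 1) % (m + 1)) ((b + 1) % (m + 1)) + (if b = 0 then 1 else 0) =
      ltZeroLast a b + (if a = 0 then 1 else 0) := by
  rw [mod_eq_ite_of_lt_two_mul (x := a + 1) (n := m + 1) (by omega),
    mod_eq_ite_of_lt_two_mul (x := b + 1) (n := m + 1) (by omega)]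
  unfold ltZeroLast
  split_ifs <;> grind

end TriangleQuiver

def triangleOrbit (m d e a : ℕ) : CQ (Fin 3) :=
  triangleQuiver m a ((a + d) % (m + 1)) d (e + ltZeroLast a ((a + d) % (m + 1)))

section TriangleOrbit

variable {m d e a : ℕ}

lemma mutate_triangleOrbit (hd : 1 ≤ d) (hdm : d ≤ m) (ha : a ≤ m) :
    mutate m (triangleOrbit m d e a) 0 = triangleOrbit m d e ((a + 1) % (m + 1)) := by
  unfold triangleOrbit
  set b := (a + d) % (m + 1) with hb_def
  have hb : b ≤ m := mod_add_one_le _ _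
  have hab : b = a + d ∨ b + (m + 1) = a + d := by
    rw [hb_def, mod_eq_ite_of_lt_two_mul (by omega)]
    split_ifs <;> omega
  have hsucc : ((a + 1) % (m + 1) + d) % (m + 1) = (b + 1) % (m + 1) := by
    rw [Nat.mod_add_mod, Nat.mod_add_mod, add_right_comm]
  have hinv := ltZeroLast_succ hd hdm ha hb hab
  rw [hsucc, mutate_triangleQuiver hd hdm ha hb hab fun hb0 => by simp [ltZeroLast, hb0]]
  congr 1
  omega

lemma iterate_mutate_triangleOrbit (hd : 1 ≤ d) (hdm : d ≤ m) (ha : a ≤ m) (k : ℕ) :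
    (fun R => mutate m R 0)^[k] (triangleOrbit m d e a) =
      triangleOrbit m d e ((a + k) % (m + 1)) := by
  induction k with
  | zero => rw [Function.iterate_zero_apply, add_zero, Nat.mod_eq_of_lt (by omega)]
  | succ k ih =>
    rw [Function.iterate_succ_apply', ih,
      mutate_triangleOrbit hd hdm (mod_add_one_le _ _),
      Nat.mod_add_mod, add_assoc]

lemma isPeriodicPt_mutate_triangleOrbit (hd : 1 ≤ d) (hdm : d ≤ m) (ha : a ≤ m) :
    Function.IsPeriodicPt (fun R => mutate m R 0) (m + 1) (triangleOrbit m d e a) := by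
  rw [Function.IsPeriodicPt, Function.IsFixedPt, iterate_mutate_triangleOrbit hd hdm ha,
    Nat.add_mod_right, Nat.mod_eq_of_lt (by omega)]

end TriangleOrbit

lemma triQ_eq_triangleOrbit {m c1 c2 : ℕ} (hlt : c1 < c2) (hle : c2 ≤ m) :
    triQ m c1 c2 (c2 - c1) = triangleOrbit m (c2 - c1) (if c1 = 0 then 1 else 0) c1 := by
  have hc2 : (c1 + (c2 - c1)) % (m + 1) = c2 := by
    rw [Nat.add_sub_cancel' hlt.le, Nat.mod_eq_of_lt (by omega)]
  have hp : (if c1 = 0 then 1 else 0) + ltZeroLast c1 c2 = 1 := by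
    unfold ltZeroLast
    split_ifs <;> omega
  unfold triangleOrbit
  rw [hc2, hp]
  funext i j c
  fin_cases i <;> fin_cases j <;> simp [triQ, triangleQuiver]

theorem stmt14_general (m c1 c2 : ℕ) (hlt : c1 < c2) (hle : c2 ≤ m) :
    (fun R : CQ (Fin 3) => mutate m R 0)^[m + 1] (triQ m c1 c2 (c2 - c1)) =
      triQ m c1 c2 (c2 - c1) := by
  rw [triQ_eq_triangleOrbit hlt hle]
  exact isPeriodicPt_mutate_triangleOrbit (by omega) (by omega) (by omega)

/-- for the triangle `v →^{c₁} u₁`, `v →^{c₂} u₂`,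
`u₁ →^{c₂-c₁} u₂` with `c₁ < c₂ ≤ m`, mutating `m+1` times at `v` is the
identity. -/
theorem stmt14 (m c1 c2 : ℕ) (hm : 1 ≤ m) (hlt : c1 < c2) (hle : c2 ≤ m) :
    (fun R : CQ (Fin 3) => mutate m R 0)^[m + 1] (triQ m c1 c2 (c2 - c1)) =
      triQ m c1 c2 (c2 - c1) :=
  stmt14_general m c1 c2 hlt hle

end CM
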